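/- arXiv:0808.2799 — 3 statements merged into one kernel-verified Lean document; each statement's English description precedes it below -/
import Mathlib

section
/- Let (Φ1,Φ2,Φ3) be a Cliff(1,1)-structure on (V,g) of signature (2,2), and let R := λ0 R_0 + Σᵢ λᵢ R_{Φᵢ} + Σ_{i<j} λᵢⱼ [R_{Φᵢ} + R_{Φⱼ} - R_{(Φᵢ-Φⱼ)}] for real constants λ0, λᵢ, λᵢⱼ. Then for every unit timelike x, the matrix of the Jacobi operator J_R(x) restricted to x^⊥ with respect to the basis {Φ1x, Φ2x, Φ3x} equals [[λ0-3λ1, 3λ12, 3λ13], [-3λ12, λ0+3λ2, 3λ23], [-3λ13, 3λ23, λ0+3λ3]], independent of the choice of x. -/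
/-!
For a skew-adjoint `Φ` of a symmetric form, `g(Φx, x) = 0`, so the Jacobi operator of `R_Φ` is
the rank-one map `y ↦ 3 g(y, Φx) Φx`; polarising, the bracket `R_Φ + R_Ψ - R_{Φ-Ψ}` contributes
`y ↦ 3 (g(y, Φx) Ψx + g(y, Ψx) Φx)`. Hence `J_R(x)` is read off from the Gram matrix of
`x, Φ₁x, Φ₂x, Φ₃x`, which the Clifford relations make diagonal with entries
`g(x,x), g(x,x), -g(x,x), -g(x,x)`: anticommuting skew-adjoint maps send `x` to orthogonal vectors.
-/

/-- `R₀(x,y)z := g(x,z)y - g(y,z)x`. -/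
def R0V {V : Type*} [AddCommGroup V] [Module ℝ V]
    (g : V →ₗ[ℝ] V →ₗ[ℝ] ℝ) (x y z : V) : V :=
  g x z • y - g y z • x

/-- `R_Φ(x,y)z := g(Φy,z)Φx - g(Φx,z)Φy - 2g(Φx,y)Φz`. -/
def RPhiV {V : Type*} [AddCommGroup V] [Module ℝ V]
    (g : V →ₗ[ℝ] V →ₗ[ℝ] ℝ) (Φ : V →ₗ[ℝ] V) (x y z : V) : V :=
  g (Φ y) z • Φ x - g (Φ x) z • Φ y - (2 * g (Φ x) y) • Φ z

/-- The curvature tensor `λ₀R₀ + Σᵢ λᵢ R_{Φᵢ} + Σ_{i<j} λᵢⱼ[R_{Φᵢ}+R_{Φⱼ}-R_{Φᵢ-Φⱼ}]`. -/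
def bigR {V : Type*} [AddCommGroup V] [Module ℝ V]
    (g : V →ₗ[ℝ] V →ₗ[ℝ] ℝ) (Φ₁ Φ₂ Φ₃ : V →ₗ[ℝ] V)
    (l0 l1 l2 l3 l12 l13 l23 : ℝ) (x y z : V) : V :=
  l0 • R0V g x y z + l1 • RPhiV g Φ₁ x y z + l2 • RPhiV g Φ₂ x y z +
    l3 • RPhiV g Φ₃ x y z +
    l12 • (RPhiV g Φ₁ x y z + RPhiV g Φ₂ x y z - RPhiV g (Φ₁ - Φ₂) x y z) +
    l13 • (RPhiV g Φ₁ x y z + RPhiV g Φ₃ x y z - RPhiV g (Φ₁ - Φ₃) x y z) +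
    l23 • (RPhiV g Φ₂ x y z + RPhiV g Φ₃ x y z - RPhiV g (Φ₂ - Φ₃) x y z)

section Skew

variable {V : Type*} [AddCommGroup V] [Module ℝ V] {g : V →ₗ[ℝ] V →ₗ[ℝ] ℝ}
  {Φ Ψ : V →ₗ[ℝ] V}

theorem skew_sub (hΦ : ∀ v w, g (Φ v) w = - g v (Φ w)) (hΨ : ∀ v w, g (Ψ v) w = - g v (Ψ w))
    (v w : V) : g ((Φ - Ψ) v) w = - g v ((Φ - Ψ) w) := by
  simp only [LinearMap.sub_apply, map_sub, hΦ, hΨ]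
  ring

theorem skew_apply_self_of_sq_eq_id (hΦ : ∀ v w, g (Φ v) w = - g v (Φ w))
    (hsq : Φ ∘ₗ Φ = LinearMap.id) (x : V) : g (Φ x) (Φ x) = - g x x := by
  rw [hΦ x (Φ x), ← LinearMap.comp_apply Φ Φ x, hsq, LinearMap.id_apply]

theorem skew_apply_self_of_sq_eq_neg_id (hΦ : ∀ v w, g (Φ v) w = - g v (Φ w))
    (hsq : Φ ∘ₗ Φ = -LinearMap.id) (x : V) : g (Φ x) (Φ x) = g x x := by
  rw [hΦ x (Φ x), ← LinearMap.comp_apply Φ Φ x, hsq, LinearMap.neg_apply,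
    LinearMap.id_apply, map_neg, neg_neg]

theorem skew_apply_orthogonal_self (hg : ∀ v w, g v w = g w v)
    (hΦ : ∀ v w, g (Φ v) w = - g v (Φ w)) (x : V) : g (Φ x) x = 0 := by
  have h := hΦ x x
  rw [hg x] at h
  linarith

theorem skew_apply_orthogonal_of_anticomm (hg : ∀ v w, g v w = g w v)
    (hΦ : ∀ v w, g (Φ v) w = - g v (Φ w)) (hΨ : ∀ v w, g (Ψ v) w = - g v (Ψ w))
    (hac : Φ ∘ₗ Ψ + Ψ ∘ₗ Φ = 0) (x : V) : g (Φ x) (Ψ x) = 0 := by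
  have hcomm : Φ (Ψ x) = - Ψ (Φ x) :=
    eq_neg_of_add_eq_zero_left (by simpa using LinearMap.ext_iff.1 hac x)
  have h := hΨ (Φ x) x
  rw [hg, ← neg_neg (Ψ (Φ x)), ← hcomm, map_neg, ← hΦ] at h
  linarith

theorem RPhiV_jacobi (hg : ∀ v w, g v w = g w v) (hΦ : ∀ v w, g (Φ v) w = - g v (Φ w))
    (x y : V) : RPhiV g Φ y x x = (3 * g y (Φ x)) • Φ x := by
  rw [RPhiV, skew_apply_orthogonal_self hg hΦ, hΦ]
  module

theorem RPhiV_polarization_jacobi (hg : ∀ v w, g v w = g w v)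
    (hΦ : ∀ v w, g (Φ v) w = - g v (Φ w)) (hΨ : ∀ v w, g (Ψ v) w = - g v (Ψ w)) (x y : V) :
    RPhiV g Φ y x x + RPhiV g Ψ y x x - RPhiV g (Φ - Ψ) y x x =
      (3 * g y (Φ x)) • Ψ x + (3 * g y (Ψ x)) • Φ x := by
  rw [RPhiV_jacobi hg hΦ, RPhiV_jacobi hg hΨ, RPhiV_jacobi hg (skew_sub hΦ hΨ),
    LinearMap.sub_apply, map_sub]
  module

theorem bigR_jacobi (hg : ∀ v w, g v w = g w v) {Φ₁ Φ₂ Φ₃ : V →ₗ[ℝ] V}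
    (hskew₁ : ∀ v w, g (Φ₁ v) w = - g v (Φ₁ w))
    (hskew₂ : ∀ v w, g (Φ₂ v) w = - g v (Φ₂ w))
    (hskew₃ : ∀ v w, g (Φ₃ v) w = - g v (Φ₃ w))
    (l0 l1 l2 l3 l12 l13 l23 : ℝ) (x y : V) :
    bigR g Φ₁ Φ₂ Φ₃ l0 l1 l2 l3 l12 l13 l23 y x x =
      l0 • (g y x • x - g x x • y) +
        (3 * l1 * g y (Φ₁ x)) • Φ₁ x + (3 * l2 * g y (Φ₂ x)) • Φ₂ x +
        (3 * l3 * g y (Φ₃ x)) • Φ₃ x +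
        (3 * l12) • (g y (Φ₁ x) • Φ₂ x + g y (Φ₂ x) • Φ₁ x) +
        (3 * l13) • (g y (Φ₁ x) • Φ₃ x + g y (Φ₃ x) • Φ₁ x) +
        (3 * l23) • (g y (Φ₂ x) • Φ₃ x + g y (Φ₃ x) • Φ₂ x) := by
  rw [bigR, R0V, RPhiV_polarization_jacobi hg hskew₁ hskew₂,
    RPhiV_polarization_jacobi hg hskew₁ hskew₃, RPhiV_polarization_jacobi hg hskew₂ hskew₃,
    RPhiV_jacobi hg hskew₁, RPhiV_jacobi hg hskew₂, RPhiV_jacobi hg hskew₃]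
  module

end Skew

theorem jacobi_matrix_of_bigR_general {V : Type*} [AddCommGroup V] [Module ℝ V]
    (g : V →ₗ[ℝ] V →ₗ[ℝ] ℝ) (hsymm : ∀ v w, g v w = g w v)
    (Φ₁ Φ₂ Φ₃ : V →ₗ[ℝ] V)
    (hskew₁ : ∀ v w, g (Φ₁ v) w = - g v (Φ₁ w))
    (hskew₂ : ∀ v w, g (Φ₂ v) w = - g v (Φ₂ w))
    (hskew₃ : ∀ v w, g (Φ₃ v) w = - g v (Φ₃ w))
    (hsq₁ : Φ₁ ∘ₗ Φ₁ = -LinearMap.id)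
    (hsq₂ : Φ₂ ∘ₗ Φ₂ = LinearMap.id) (hsq₃ : Φ₃ ∘ₗ Φ₃ = LinearMap.id)
    (hac₁₂ : Φ₁ ∘ₗ Φ₂ + Φ₂ ∘ₗ Φ₁ = 0) (hac₁₃ : Φ₁ ∘ₗ Φ₃ + Φ₃ ∘ₗ Φ₁ = 0)
    (hac₂₃ : Φ₂ ∘ₗ Φ₃ + Φ₃ ∘ₗ Φ₂ = 0)
    (l0 l1 l2 l3 l12 l13 l23 : ℝ) :
    ∀ x : V, g x x = -1 → ∀ i : Fin 3,
      bigR g Φ₁ Φ₂ Φ₃ l0 l1 l2 l3 l12 l13 l23 (![Φ₁ x, Φ₂ x, Φ₃ x] i) x x =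
        ∑ j : Fin 3,
          (!![l0 - 3*l1, 3*l12, 3*l13;
              -3*l12, l0 + 3*l2, 3*l23;
              -3*l13, 3*l23, l0 + 3*l3] : Matrix (Fin 3) (Fin 3) ℝ) j i •
            ![Φ₁ x, Φ₂ x, Φ₃ x] j := by
  intro x hx i
  have anticomm_symm {Φ Ψ : V →ₗ[ℝ] V} (hac : Φ ∘ₗ Ψ + Ψ ∘ₗ Φ = 0) : Ψ ∘ₗ Φ + Φ ∘ₗ Ψ = 0 :=
    (add_comm _ _).trans hac
  fin_cases i <;>
    simp only [bigR_jacobi hsymm hskew₁ hskew₂ hskew₃, Fin.sum_univ_three, Matrix.of_apply,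
      Matrix.cons_val_zero, Matrix.cons_val_one, Matrix.cons_val_two, Matrix.head_cons,
      Matrix.tail_cons, Fin.isValue, Fin.zero_eta, Fin.mk_one,
      Fin.reduceFinMk, hx,
      skew_apply_orthogonal_self hsymm hskew₁, skew_apply_orthogonal_self hsymm hskew₂,
      skew_apply_orthogonal_self hsymm hskew₃,
      skew_apply_self_of_sq_eq_neg_id hskew₁ hsq₁, skew_apply_self_of_sq_eq_id hskew₂ hsq₂,
      skew_apply_self_of_sq_eq_id hskew₃ hsq₃,
      skew_apply_orthogonal_of_anticomm hsymm hskew₁ hskew₂ hac₁₂,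
      skew_apply_orthogonal_of_anticomm hsymm hskew₂ hskew₁ (anticomm_symm hac₁₂),
      skew_apply_orthogonal_of_anticomm hsymm hskew₁ hskew₃ hac₁₃,
      skew_apply_orthogonal_of_anticomm hsymm hskew₃ hskew₁ (anticomm_symm hac₁₃),
      skew_apply_orthogonal_of_anticomm hsymm hskew₂ hskew₃ hac₂₃,
      skew_apply_orthogonal_of_anticomm hsymm hskew₃ hskew₂ (anticomm_symm hac₂₃)] <;>
    module

/-- for every unit timelike `x` the matrix of the Jacobi operator
`J_R(x)` on `x^⊥` in the basis `{Φ₁x, Φ₂x, Φ₃x}` is the fixed matrix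
`[[λ₀-3λ₁, 3λ₁₂, 3λ₁₃], [-3λ₁₂, λ₀+3λ₂, 3λ₂₃], [-3λ₁₃, 3λ₂₃, λ₀+3λ₃]]`. -/
theorem jacobi_matrix_of_bigR {V : Type*} [AddCommGroup V] [Module ℝ V]
    (g : V →ₗ[ℝ] V →ₗ[ℝ] ℝ) (hsymm : ∀ v w, g v w = g w v)
    (e : Module.Basis (Fin 4) ℝ V)
    (he : ∀ i j, g (e i) (e j) =
      if i = j then (if (i : ℕ) < 2 then (-1 : ℝ) else 1) else 0)
    (Φ₁ Φ₂ Φ₃ : V →ₗ[ℝ] V)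
    (hskew₁ : ∀ v w, g (Φ₁ v) w = - g v (Φ₁ w))
    (hskew₂ : ∀ v w, g (Φ₂ v) w = - g v (Φ₂ w))
    (hskew₃ : ∀ v w, g (Φ₃ v) w = - g v (Φ₃ w))
    (hsq₁ : Φ₁ ∘ₗ Φ₁ = -LinearMap.id)
    (hsq₂ : Φ₂ ∘ₗ Φ₂ = LinearMap.id) (hsq₃ : Φ₃ ∘ₗ Φ₃ = LinearMap.id)
    (hac₁₂ : Φ₁ ∘ₗ Φ₂ + Φ₂ ∘ₗ Φ₁ = 0) (hac₁₃ : Φ₁ ∘ₗ Φ₃ + Φ₃ ∘ₗ Φ₁ = 0)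
    (hac₂₃ : Φ₂ ∘ₗ Φ₃ + Φ₃ ∘ₗ Φ₂ = 0)
    (hK : Φ₃ = Φ₂ ∘ₗ Φ₁)
    (l0 l1 l2 l3 l12 l13 l23 : ℝ) :
    ∀ x : V, g x x = -1 → ∀ i : Fin 3,
      bigR g Φ₁ Φ₂ Φ₃ l0 l1 l2 l3 l12 l13 l23 (![Φ₁ x, Φ₂ x, Φ₃ x] i) x x =
        ∑ j : Fin 3,
          (!![l0 - 3*l1, 3*l12, 3*l13;
              -3*l12, l0 + 3*l2, 3*l23;
              -3*l13, 3*l23, l0 + 3*l3] : Matrix (Fin 3) (Fin 3) ℝ) j i •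
            ![Φ₁ x, Φ₂ x, Φ₃ x] j :=
  jacobi_matrix_of_bigR_general g hsymm Φ₁ Φ₂ Φ₃ hskew₁ hskew₂ hskew₃ hsq₁ hsq₂ hsq₃ hac₁₂ hac₁₃
    hac₂₃ l0 l1 l2 l3 l12 l13 l23
end

section
/- Let (Φ1,Φ2,Φ3) be a Cliff(1,1)-structure on (V,g) of signature (2,2). Then 3R_0 = -R_{Φ1} + R_{Φ2} + R_{Φ3} as algebraic curvature tensors on V. -/
/-- Twice the polarization in `x` of the identity `clifford_frame_expansion`, tested at `z`. -/
def cliffordPolarization {V : Type*} [AddCommGroup V] [Module ℝ V]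
    (g : V →ₗ[ℝ] V →ₗ[ℝ] ℝ) (Φ₁ Φ₂ Φ₃ : V →ₗ[ℝ] V) (z : V) : V →ₗ[ℝ] V →ₗ[ℝ] V :=
  LinearMap.mk₂ ℝ (fun u v =>
    g z u • v + g z v • u + g z (Φ₁ u) • Φ₁ v + g z (Φ₁ v) • Φ₁ u
      - g z (Φ₂ u) • Φ₂ v - g z (Φ₂ v) • Φ₂ u
      - g z (Φ₃ u) • Φ₃ v - g z (Φ₃ v) • Φ₃ u - (2 * g u v) • z)
    (fun u₁ u₂ v => by simp only [map_add, LinearMap.add_apply, add_smul]; module)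
    (fun c u v => by simp only [map_smul, LinearMap.smul_apply, smul_eq_mul, mul_smul]; module)
    (fun u v₁ v₂ => by simp only [map_add, add_smul, mul_add]; module)
    (fun c u v => by simp only [map_smul, smul_eq_mul, mul_smul]; module)

section

variable {V : Type*} [AddCommGroup V] [Module ℝ V] {g : V →ₗ[ℝ] V →ₗ[ℝ] ℝ}

theorem exists_ne_zero_apply_add_smul_self_ne_zero {u v : V} (huv : g u v = 0) (hvu : g v u = 0)
    (hv : g v v ≠ 0) : ∃ t : ℝ, t ≠ 0 ∧ g (u + t • v) (u + t • v) ≠ 0 := by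
  have hexpand : ∀ t : ℝ, g (u + t • v) (u + t • v) = g u u + t ^ 2 * g v v := by
    intro t
    simp only [map_add, map_smul, LinearMap.add_apply, LinearMap.smul_apply, smul_eq_mul, huv,
      hvu]
    ring
  by_cases h : g u u + g v v = 0
  · -- then `g(u + 2v, u + 2v) = 3 g(v,v)`
    exact ⟨2, two_ne_zero, by rw [hexpand]; intro h'; apply hv; linarith⟩
  · exact ⟨1, one_ne_zero, by rwa [hexpand, one_pow, one_mul]⟩

theorem LinearMap.eq_zero_of_apply_self_eq_zero_of_isOrthoᵢ {ι W : Type*} [AddCommGroup W]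
    [Module ℝ W] (e : Module.Basis ι ℝ V) (horth : g.IsOrthoᵢ e) (hne : ∀ i, g (e i) (e i) ≠ 0)
    {B : V →ₗ[ℝ] V →ₗ[ℝ] W} (hB : ∀ u v, B u v = B v u)
    (hdiag : ∀ u, g u u ≠ 0 → B u u = 0) : B = 0 := by
  refine LinearMap.ext_basis e e fun i j => ?_
  by_cases hij : i = j
  · subst hij
    exact hdiag _ (hne i)
  obtain ⟨t, ht, hnull⟩ := exists_ne_zero_apply_add_smul_self_ne_zero (horth hij)
    (horth (Ne.symm hij)) (hne j)
  have h := hdiag _ hnull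
  simp only [map_add, map_smul, LinearMap.add_apply, LinearMap.smul_apply, hdiag _ (hne i),
    hdiag _ (hne j), hB (e j) (e i), smul_zero, add_zero, zero_add, ← two_smul ℝ, smul_smul] at h
  simpa [ht] using h

theorem apply_self_eq_zero_of_skew (hsymm : ∀ v w, g v w = g w v) {Φ : V →ₗ[ℝ] V}
    (hΦ : ∀ v w, g (Φ v) w = -g v (Φ w)) (x : V) :
    g (Φ x) x = 0 := by
  linarith [hΦ x x, hsymm x (Φ x)]

theorem apply_eq_zero_of_skew_of_anticomm (hsymm : ∀ v w, g v w = g w v) {Φ Ψ : V →ₗ[ℝ] V}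
    (hΦ : ∀ v w, g (Φ v) w = -g v (Φ w)) (hΨ : ∀ v w, g (Ψ v) w = -g v (Ψ w))
    (hanti : Φ ∘ₗ Ψ + Ψ ∘ₗ Φ = 0) (x : V) : g (Φ x) (Ψ x) = 0 := by
  have hx : Φ (Ψ x) = -Ψ (Φ x) := eq_neg_of_add_eq_zero_left (LinearMap.congr_fun hanti x)
  have hΦΨ := hΦ x (Ψ x)
  rw [hx, map_neg, neg_neg] at hΦΨ
  linarith [hΨ x (Φ x), hsymm (Φ x) (Ψ x)]

theorem clifford_frame_expansion [FiniteDimensional ℝ V] (hdim : Module.finrank ℝ V = 4)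
    (hsymm : ∀ v w, g v w = g w v) {Φ₁ Φ₂ Φ₃ : V →ₗ[ℝ] V}
    (hskew₁ : ∀ v w, g (Φ₁ v) w = - g v (Φ₁ w))
    (hskew₂ : ∀ v w, g (Φ₂ v) w = - g v (Φ₂ w))
    (hskew₃ : ∀ v w, g (Φ₃ v) w = - g v (Φ₃ w))
    (hsq₁ : Φ₁ ∘ₗ Φ₁ = -LinearMap.id)
    (hsq₂ : Φ₂ ∘ₗ Φ₂ = LinearMap.id) (hsq₃ : Φ₃ ∘ₗ Φ₃ = LinearMap.id)
    (hac₁₂ : Φ₁ ∘ₗ Φ₂ + Φ₂ ∘ₗ Φ₁ = 0) (hac₁₃ : Φ₁ ∘ₗ Φ₃ + Φ₃ ∘ₗ Φ₁ = 0)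
    (hac₂₃ : Φ₂ ∘ₗ Φ₃ + Φ₃ ∘ₗ Φ₂ = 0) {x : V} (hx : g x x ≠ 0) (z : V) :
    g z x • x + g z (Φ₁ x) • Φ₁ x - g z (Φ₂ x) • Φ₂ x - g z (Φ₃ x) • Φ₃ x = g x x • z := by
  have h₁₁ : g (Φ₁ x) (Φ₁ x) = g x x := by
    rw [hskew₁, ← LinearMap.comp_apply Φ₁, hsq₁]; simp
  have h₂₂ : g (Φ₂ x) (Φ₂ x) = -g x x := by
    rw [hskew₂, ← LinearMap.comp_apply Φ₂, hsq₂]; simp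
  have h₃₃ : g (Φ₃ x) (Φ₃ x) = -g x x := by
    rw [hskew₃, ← LinearMap.comp_apply Φ₃, hsq₃]; simp
  have h₁₀ := apply_self_eq_zero_of_skew hsymm hskew₁ x
  have h₂₀ := apply_self_eq_zero_of_skew hsymm hskew₂ x
  have h₃₀ := apply_self_eq_zero_of_skew hsymm hskew₃ x
  have h₁₂ := apply_eq_zero_of_skew_of_anticomm hsymm hskew₁ hskew₂ hac₁₂ x
  have h₁₃ := apply_eq_zero_of_skew_of_anticomm hsymm hskew₁ hskew₃ hac₁₃ x
  have h₂₃ := apply_eq_zero_of_skew_of_anticomm hsymm hskew₂ hskew₃ hac₂₃ x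
  have h₀₁ : g x (Φ₁ x) = 0 := (hsymm _ _).trans h₁₀
  have h₀₂ : g x (Φ₂ x) = 0 := (hsymm _ _).trans h₂₀
  have h₀₃ : g x (Φ₃ x) = 0 := (hsymm _ _).trans h₃₀
  have h₂₁ : g (Φ₂ x) (Φ₁ x) = 0 := (hsymm _ _).trans h₁₂
  have h₃₁ : g (Φ₃ x) (Φ₁ x) = 0 := (hsymm _ _).trans h₁₃
  have h₃₂ : g (Φ₃ x) (Φ₂ x) = 0 := (hsymm _ _).trans h₂₃
  let f : Fin 4 → V := ![x, Φ₁ x, Φ₂ x, Φ₃ x]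
  have horth : g.IsOrthoᵢ f := by
    rw [LinearMap.isOrthoᵢ_def]
    intro i j hij
    fin_cases i <;> fin_cases j <;> first | exact absurd rfl hij |
      simp [f, h₀₁, h₀₂, h₀₃, h₁₀, h₁₂, h₁₃, h₂₀, h₂₁, h₂₃, h₃₀, h₃₁, h₃₂]
  have hne : ∀ i, g (f i) (f i) ≠ 0 := by
    intro i
    fin_cases i <;> simp [f, hx, h₁₁, h₂₂, h₃₃]
  let b := basisOfLinearIndependentOfCardEqFinrank
    (LinearMap.linearIndependent_of_isOrthoᵢ horth hne) (by rw [hdim, Fintype.card_fin])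
  suffices hT : (g.flip x).smulRight x + (g.flip (Φ₁ x)).smulRight (Φ₁ x)
      - (g.flip (Φ₂ x)).smulRight (Φ₂ x) - (g.flip (Φ₃ x)).smulRight (Φ₃ x)
      = g x x • LinearMap.id by
    simpa using LinearMap.congr_fun hT z
  refine b.ext fun i => ?_
  rw [coe_basisOfLinearIndependentOfCardEqFinrank]
  fin_cases i <;>
    simp [f, h₀₁, h₀₂, h₀₃, h₁₀, h₁₁, h₁₂, h₁₃, h₂₀, h₂₁, h₂₂, h₂₃, h₃₀, h₃₁, h₃₂, h₃₃]

theorem cliffordPolarization_apply (Φ₁ Φ₂ Φ₃ : V →ₗ[ℝ] V) (z u v : V) :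
    cliffordPolarization g Φ₁ Φ₂ Φ₃ z u v =
      g z u • v + g z v • u + g z (Φ₁ u) • Φ₁ v + g z (Φ₁ v) • Φ₁ u
        - g z (Φ₂ u) • Φ₂ v - g z (Φ₂ v) • Φ₂ u
        - g z (Φ₃ u) • Φ₃ v - g z (Φ₃ v) • Φ₃ u - (2 * g u v) • z :=
  rfl

theorem cliffordPolarization_eq_zero [FiniteDimensional ℝ V] (hdim : Module.finrank ℝ V = 4)
    {ι : Type*} (e : Module.Basis ι ℝ V) (horth : g.IsOrthoᵢ e) (hne : ∀ i, g (e i) (e i) ≠ 0)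
    (hsymm : ∀ v w, g v w = g w v) {Φ₁ Φ₂ Φ₃ : V →ₗ[ℝ] V}
    (hskew₁ : ∀ v w, g (Φ₁ v) w = - g v (Φ₁ w))
    (hskew₂ : ∀ v w, g (Φ₂ v) w = - g v (Φ₂ w))
    (hskew₃ : ∀ v w, g (Φ₃ v) w = - g v (Φ₃ w))
    (hsq₁ : Φ₁ ∘ₗ Φ₁ = -LinearMap.id)
    (hsq₂ : Φ₂ ∘ₗ Φ₂ = LinearMap.id) (hsq₃ : Φ₃ ∘ₗ Φ₃ = LinearMap.id)
    (hac₁₂ : Φ₁ ∘ₗ Φ₂ + Φ₂ ∘ₗ Φ₁ = 0) (hac₁₃ : Φ₁ ∘ₗ Φ₃ + Φ₃ ∘ₗ Φ₁ = 0)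
    (hac₂₃ : Φ₂ ∘ₗ Φ₃ + Φ₃ ∘ₗ Φ₂ = 0) (z : V) :
    cliffordPolarization g Φ₁ Φ₂ Φ₃ z = 0 := by
  refine LinearMap.eq_zero_of_apply_self_eq_zero_of_isOrthoᵢ e horth hne
    (fun u v => by simp only [cliffordPolarization_apply, hsymm u v]; module) fun u hu => ?_
  have hexp := clifford_frame_expansion hdim hsymm hskew₁ hskew₂ hskew₃ hsq₁ hsq₂ hsq₃
    hac₁₂ hac₁₃ hac₂₃ hu z
  rw [cliffordPolarization_apply]
  linear_combination (norm := module) (2 : ℝ) • hexp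

theorem cliffordPolarization_sub_cliffordPolarization (hsymm : ∀ v w, g v w = g w v)
    {Φ₁ Φ₂ Φ₃ : V →ₗ[ℝ] V}
    (hskew₁ : ∀ v w, g (Φ₁ v) w = - g v (Φ₁ w))
    (hskew₂ : ∀ v w, g (Φ₂ v) w = - g v (Φ₂ w))
    (hskew₃ : ∀ v w, g (Φ₃ v) w = - g v (Φ₃ w)) (x y z : V) :
    cliffordPolarization g Φ₁ Φ₂ Φ₃ x y z - cliffordPolarization g Φ₁ Φ₂ Φ₃ y x z =
      (3 : ℝ) • R0V g x y z - (-RPhiV g Φ₁ x y z + RPhiV g Φ₂ x y z + RPhiV g Φ₃ x y z) := by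
  simp only [cliffordPolarization_apply, R0V, RPhiV, hsymm y x, hsymm y (Φ₁ x), hsymm y (Φ₂ x),
    hsymm y (Φ₃ x), hskew₁ _ y, hskew₂ _ y, hskew₃ _ y, hskew₁ _ z, hskew₂ _ z, hskew₃ _ z]
  module

end

theorem three_R0_eq_general {V : Type*} [AddCommGroup V] [Module ℝ V]
    (g : V →ₗ[ℝ] V →ₗ[ℝ] ℝ) (hsymm : ∀ v w, g v w = g w v)
    (e : Module.Basis (Fin 4) ℝ V)
    (he : ∀ i j, g (e i) (e j) =
      if i = j then (if (i : ℕ) < 2 then (-1 : ℝ) else 1) else 0)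
    (Φ₁ Φ₂ Φ₃ : V →ₗ[ℝ] V)
    (hskew₁ : ∀ v w, g (Φ₁ v) w = - g v (Φ₁ w))
    (hskew₂ : ∀ v w, g (Φ₂ v) w = - g v (Φ₂ w))
    (hskew₃ : ∀ v w, g (Φ₃ v) w = - g v (Φ₃ w))
    (hsq₁ : Φ₁ ∘ₗ Φ₁ = -LinearMap.id)
    (hsq₂ : Φ₂ ∘ₗ Φ₂ = LinearMap.id) (hsq₃ : Φ₃ ∘ₗ Φ₃ = LinearMap.id)
    (hac₁₂ : Φ₁ ∘ₗ Φ₂ + Φ₂ ∘ₗ Φ₁ = 0) (hac₁₃ : Φ₁ ∘ₗ Φ₃ + Φ₃ ∘ₗ Φ₁ = 0)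
    (hac₂₃ : Φ₂ ∘ₗ Φ₃ + Φ₃ ∘ₗ Φ₂ = 0) :
    ∀ x y z : V, (3 : ℝ) • R0V g x y z =
      - RPhiV g Φ₁ x y z + RPhiV g Φ₂ x y z + RPhiV g Φ₃ x y z := by
  intro x y z
  have horth : g.IsOrthoᵢ e := LinearMap.isOrthoᵢ_def.mpr fun i j hij => by rw [he, if_neg hij]
  have hne : ∀ i, g (e i) (e i) ≠ 0 := fun i => by rw [he, if_pos rfl]; split_ifs <;> norm_num
  have : FiniteDimensional ℝ V := e.finiteDimensional_of_finite
  have hpol := cliffordPolarization_eq_zero (by simpa using Module.finrank_eq_card_basis e) e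
    horth hne hsymm hskew₁ hskew₂ hskew₃ hsq₁ hsq₂ hsq₃ hac₁₂ hac₁₃ hac₂₃
  have h := cliffordPolarization_sub_cliffordPolarization hsymm hskew₁ hskew₂ hskew₃ x y z
  simp only [hpol, LinearMap.zero_apply, sub_self] at h
  exact sub_eq_zero.mp h.symm

/-- for a Cliff(1,1)-structure, `3R₀ = -R_{Φ₁} + R_{Φ₂} + R_{Φ₃}`. -/
theorem three_R0_eq {V : Type*} [AddCommGroup V] [Module ℝ V]
    (g : V →ₗ[ℝ] V →ₗ[ℝ] ℝ) (hsymm : ∀ v w, g v w = g w v)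
    (e : Module.Basis (Fin 4) ℝ V)
    (he : ∀ i j, g (e i) (e j) =
      if i = j then (if (i : ℕ) < 2 then (-1 : ℝ) else 1) else 0)
    (Φ₁ Φ₂ Φ₃ : V →ₗ[ℝ] V)
    (hskew₁ : ∀ v w, g (Φ₁ v) w = - g v (Φ₁ w))
    (hskew₂ : ∀ v w, g (Φ₂ v) w = - g v (Φ₂ w))
    (hskew₃ : ∀ v w, g (Φ₃ v) w = - g v (Φ₃ w))
    (hsq₁ : Φ₁ ∘ₗ Φ₁ = -LinearMap.id)
    (hsq₂ : Φ₂ ∘ₗ Φ₂ = LinearMap.id) (hsq₃ : Φ₃ ∘ₗ Φ₃ = LinearMap.id)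
    (hac₁₂ : Φ₁ ∘ₗ Φ₂ + Φ₂ ∘ₗ Φ₁ = 0) (hac₁₃ : Φ₁ ∘ₗ Φ₃ + Φ₃ ∘ₗ Φ₁ = 0)
    (hac₂₃ : Φ₂ ∘ₗ Φ₃ + Φ₃ ∘ₗ Φ₂ = 0)
    (hK : Φ₃ = Φ₂ ∘ₗ Φ₁) :
    ∀ x y z : V, (3 : ℝ) • R0V g x y z =
      - RPhiV g Φ₁ x y z + RPhiV g Φ₂ x y z + RPhiV g Φ₃ x y z :=
  three_R0_eq_general g hsymm e he Φ₁ Φ₂ Φ₃ hskew₁ hskew₂ hskew₃ hsq₁ hsq₂ hsq₃ hac₁₂ hac₁₃ hac₂₃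
end

section
/- Let A be an algebraic curvature tensor on a signature (2,2) inner product space whose nonvanishing components in a pseudo-orthonormal basis {e1,e2,e3,e4} are A1221 = A4334 = -α, A1331 = A4224 = β, A1441 = A3223 = γ, A1234 = (2α-β-γ)/3, A1423 = (-α-β+2γ)/3, A1342 = (-α+2β-γ)/3 (together with those forced by curvature symmetries). Then J_A(e1) restricted to {e2,e3,e4} is the diagonal matrix diag(α, β, γ). -/
theorem swap_pairs_of_antisymm {V M : Type*} [AddGroup M] (A : V → V → V → V → M)
    (hA1 : ∀ x y z v, A x y z v = - A y x z v)
    (hA2 : ∀ x y z v, A x y z v = - A x y v z) (x y z v : V) :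
    A x y z v = A y x v z := by
  rw [hA1, hA2, neg_neg]

def typeISupport : List (Multiset (Fin 4)) :=
  [{0, 0, 1, 1}, {2, 2, 3, 3}, {0, 0, 2, 2}, {1, 1, 3, 3},
    {0, 0, 3, 3}, {1, 1, 2, 2}, {0, 1, 2, 3}]

theorem offDiag_notMem_typeISupport :
    ∀ i j : Fin 4, 1 ≤ (i : ℕ) → 1 ≤ (j : ℕ) → i ≠ j →
      ({i, 0, 0, j} : Multiset (Fin 4)) ∉ typeISupport := by
  decide

theorem typeI_jacobi_diagonal_general {V : Type*} [AddCommGroup V] [Module ℝ V]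
    (e : Module.Basis (Fin 4) ℝ V)
    (A : V →ₗ[ℝ] V →ₗ[ℝ] V →ₗ[ℝ] V →ₗ[ℝ] ℝ)
    (hA1 : ∀ x y z v, A x y z v = - A y x z v)
    (hA2 : ∀ x y z v, A x y z v = - A x y v z)
    (α β γ : ℝ)
    (h1221 : A (e 0) (e 1) (e 1) (e 0) = -α)
    (h1331 : A (e 0) (e 2) (e 2) (e 0) = β)
    (h1441 : A (e 0) (e 3) (e 3) (e 0) = γ)
    (hvanish : ∀ i j k l : Fin 4,
      ({i, j, k, l} : Multiset (Fin 4)) ∉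
        ([{0, 0, 1, 1}, {2, 2, 3, 3}, {0, 0, 2, 2}, {1, 1, 3, 3},
          {0, 0, 3, 3}, {1, 1, 2, 2}, {0, 1, 2, 3}] : List (Multiset (Fin 4))) →
      A (e i) (e j) (e k) (e l) = 0) :
    ∀ i j : Fin 4, 1 ≤ (i : ℕ) → 1 ≤ (j : ℕ) →
      A (e i) (e 0) (e 0) (e j) =
        (if i = j then ![0, α, β, γ] i else 0) *
          (if (j : ℕ) < 2 then (-1 : ℝ) else 1) := by
  intro i j hi hj
  by_cases hij : i = j
  · subst hij
    rw [if_pos rfl, swap_pairs_of_antisymm (fun x y z v => A x y z v) hA1 hA2]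
    fin_cases i
    · simp at hi
    · simp [h1221]
    · simp [h1331]
    · simp [h1441]
  · rw [if_neg hij, zero_mul]
    exact hvanish i 0 0 j (offDiag_notMem_typeISupport i j hi hj hij)

/-- Type I of Theorem 2.1: if the nonvanishing components of an
algebraic curvature tensor `A` in a pseudo-orthonormal basis `{e₁,e₂,e₃,e₄}`
(indexed here by `Fin 4`) are the listed ones, then `J_A(e₁)` restricted to
`{e₂,e₃,e₄}` is the diagonal matrix `diag(α,β,γ)`. -/
theorem typeI_jacobi_diagonal {V : Type*} [AddCommGroup V] [Module ℝ V]
    (g : V →ₗ[ℝ] V →ₗ[ℝ] ℝ) (hsymm : ∀ v w, g v w = g w v)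
    (e : Module.Basis (Fin 4) ℝ V)
    (he : ∀ i j, g (e i) (e j) =
      if i = j then (if (i : ℕ) < 2 then (-1 : ℝ) else 1) else 0)
    (A : V →ₗ[ℝ] V →ₗ[ℝ] V →ₗ[ℝ] V →ₗ[ℝ] ℝ)
    (hA1 : ∀ x y z v, A x y z v = - A y x z v)
    (hA2 : ∀ x y z v, A x y z v = - A x y v z)
    (hA3 : ∀ x y z v, A x y z v = A z v x y)
    (hA4 : ∀ x y z v, A x y z v + A y z x v + A z x y v = 0)
    (α β γ : ℝ)
    (h1221 : A (e 0) (e 1) (e 1) (e 0) = -α)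
    (h4334 : A (e 3) (e 2) (e 2) (e 3) = -α)
    (h1331 : A (e 0) (e 2) (e 2) (e 0) = β)
    (h4224 : A (e 3) (e 1) (e 1) (e 3) = β)
    (h1441 : A (e 0) (e 3) (e 3) (e 0) = γ)
    (h3223 : A (e 2) (e 1) (e 1) (e 2) = γ)
    (h1234 : A (e 0) (e 1) (e 2) (e 3) = (2*α - β - γ)/3)
    (h1423 : A (e 0) (e 3) (e 1) (e 2) = (-α - β + 2*γ)/3)
    (h1342 : A (e 0) (e 2) (e 3) (e 1) = (-α + 2*β - γ)/3)
    (hvanish : ∀ i j k l : Fin 4,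
      ({i, j, k, l} : Multiset (Fin 4)) ∉
        ([{0, 0, 1, 1}, {2, 2, 3, 3}, {0, 0, 2, 2}, {1, 1, 3, 3},
          {0, 0, 3, 3}, {1, 1, 2, 2}, {0, 1, 2, 3}] : List (Multiset (Fin 4))) →
      A (e i) (e j) (e k) (e l) = 0) :
    ∀ i j : Fin 4, 1 ≤ (i : ℕ) → 1 ≤ (j : ℕ) →
      A (e i) (e 0) (e 0) (e j) =
        (if i = j then ![0, α, β, γ] i else 0) *
          (if (j : ℕ) < 2 then (-1 : ℝ) else 1) :=
  typeI_jacobi_diagonal_general e A hA1 hA2 α β γ h1221 h1331 h1441 hvanish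
end
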